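/- (Theorem 1, preferred semantics.) For every valuation v ⊆ 𝒫: v ⊨ Preferred if and only if E(v) is a preferred extension of the AF (A_v, R_v), i.e. a ⊆-maximal complete extension of (A_v, R_v). Moreover, for every AF (A,R), the set of preferred extensions of (A,R) equals {E(v) : (v_(A,R), v) ∈ ‖makeExt^pr‖}, where makeExt^pr = vary(IN_U); Preferred?. -/

import Mathlib

noncomputable section

namespace DLPA

/-- Propositional variables: awareness, acceptance, attack, auxiliary acceptance
copies, plus countably many further auxiliary variables. -/
inductive PVar (U : Type) : Type
  | aw : U → PVar U
  | inn : U → PVar U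
  | att : U → U → PVar U
  | inn' : U → PVar U
  | aux : Nat → PVar U

-- DL-PA formulas and programs, by mutual recursion.
mutual
  inductive Form (U : Type) : Type
    | var : PVar U → Form U
    | neg : Form U → Form U
    | conj : Form U → Form U → Form U
    | box : Prog U → Form U → Form U
  inductive Prog (U : Type) : Type
    | add : PVar U → Prog U           -- +p
    | rem : PVar U → Prog U           -- −p
    | test : Form U → Prog U          -- φ?
    | seq : Prog U → Prog U → Prog U
    | choice : Prog U → Prog U → Prog U
    | conv : Prog U → Prog U
end

variable {U : Type}

/-- A valuation is a set of propositional variables. -/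
abbrev Val (U : Type) := Set (PVar U)

-- Satisfaction of formulas and interpretation of programs, by mutual recursion.
mutual
  def Sat : Val U → Form U → Prop
    | v, Form.var p => p ∈ v
    | v, Form.neg φ => ¬ Sat v φ
    | v, Form.conj φ ψ => Sat v φ ∧ Sat v ψ
    | v, Form.box π φ => ∀ w, Rel π v w → Sat w φ
  def Rel : Prog U → Val U → Val U → Prop
    | Prog.add p, v, w => w = v ∪ {p}
    | Prog.rem p, v, w => w = v \ {p}
    | Prog.test φ, v, w => w = v ∧ Sat v φ
    | Prog.seq π₁ π₂, v, w => ∃ u, Rel π₁ v u ∧ Rel π₂ u w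
    | Prog.choice π₁ π₂, v, w => Rel π₁ v w ∨ Rel π₂ v w
    | Prog.conv π, v, w => Rel π w v
end

def Form.falsum : Form U := Form.conj (Form.var (PVar.aux 0)) (Form.neg (Form.var (PVar.aux 0)))
def Form.top : Form U := Form.neg Form.falsum
def Form.impl (φ ψ : Form U) : Form U := Form.neg (Form.conj φ (Form.neg ψ))
def Form.disj (φ ψ : Form U) : Form U := Form.neg (Form.conj (Form.neg φ) (Form.neg ψ))
def Form.equiv (φ ψ : Form U) : Form U := Form.conj (Form.impl φ ψ) (Form.impl ψ φ)
def Form.dia (π : Prog U) (φ : Form U) : Form U := Form.neg (Form.box π (Form.neg φ))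
def Prog.skip : Prog U := Prog.test Form.top

/-- Sequential composition of a list of programs (`skip` for the empty list). -/
def seqList {β : Type} (f : β → Prog U) : List β → Prog U
  | [] => Prog.skip
  | p :: ps => Prog.seq (f p) (seqList f ps)

/-- Nondeterministic composition of a list of programs (`skip` for the empty list). -/
def unionList {β : Type} (f : β → Prog U) : List β → Prog U
  | [] => Prog.skip
  | [p] => f p
  | p :: ps => Prog.choice (f p) (unionList f ps)

def mkTrueOne (L : List (PVar U)) : Prog U :=
  unionList (fun p => Prog.seq (Prog.test (Form.neg (Form.var p))) (Prog.add p)) L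
def mkFalseOne (L : List (PVar U)) : Prog U :=
  unionList (fun p => Prog.seq (Prog.test (Form.var p)) (Prog.rem p)) L
def mkTrueSome (L : List (PVar U)) : Prog U :=
  seqList (fun p => Prog.choice (Prog.add p) Prog.skip) L
def mkFalseSome (L : List (PVar U)) : Prog U :=
  seqList (fun p => Prog.choice (Prog.rem p) Prog.skip) L
def vary (L : List (PVar U)) : Prog U :=
  seqList (fun p => Prog.choice (Prog.add p) (Prog.rem p)) L
/-- dis(ATT_R): for each pair (x,y) in the list, make true att_{x,y} or att_{y,x}. -/
def dis (L : List (U × U)) : Prog U :=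
  seqList (fun q => Prog.choice (Prog.add (PVar.att q.1 q.2)) (Prog.add (PVar.att q.2 q.1))) L

def conjList : List (Form U) → Form U
  | [] => Form.top
  | φ :: φs => Form.conj φ (conjList φs)
def disjList : List (Form U) → Form U
  | [] => Form.falsum
  | φ :: φs => Form.disj φ (disjList φs)

/-- The elements of a finite universe in a fixed order. -/
def enum (U : Type) [Fintype U] : List U := Finset.univ.toList

def bigConj [Fintype U] (f : U → Form U) : Form U := conjList ((enum U).map f)
def bigDisj [Fintype U] (f : U → Form U) : Form U := disjList ((enum U).map f)

def INlist (U : Type) [Fintype U] : List (PVar U) := (enum U).map PVar.inn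

/-- copy(IN_U) copies the value of in_x to in'_x, for every x ∈ U. -/
def copyIN (U : Type) [Fintype U] : Prog U :=
  seqList (fun x => Prog.choice
      (Prog.seq (Prog.test (Form.var (PVar.inn x))) (Prog.add (PVar.inn' x)))
      (Prog.seq (Prog.test (Form.neg (Form.var (PVar.inn x)))) (Prog.rem (PVar.inn' x))))
    (enum U)

def Well (U : Type) [Fintype U] : Form U :=
  bigConj (fun x => Form.impl (Form.var (PVar.inn x)) (Form.var (PVar.aw x)))

def ConFree (U : Type) [Fintype U] : Form U :=
  Form.conj (Well U) (bigConj fun x => bigConj fun y =>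
    Form.neg (Form.conj (Form.var (PVar.inn x))
      (Form.conj (Form.var (PVar.inn y)) (Form.var (PVar.att x y)))))

def AdmissibleF (U : Type) [Fintype U] : Form U :=
  Form.conj (ConFree U) (bigConj fun x => Form.impl (Form.var (PVar.inn x))
    (bigConj fun y => Form.impl (Form.conj (Form.var (PVar.aw y)) (Form.var (PVar.att y x)))
      (bigDisj fun z => Form.conj (Form.var (PVar.inn z)) (Form.var (PVar.att z y)))))

def StableF (U : Type) [Fintype U] : Form U :=
  Form.conj (Well U) (bigConj fun x => Form.impl (Form.var (PVar.aw x))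
    (Form.equiv (Form.var (PVar.inn x))
      (Form.neg (bigDisj fun y => Form.conj (Form.var (PVar.inn y)) (Form.var (PVar.att y x))))))

def CompleteF (U : Type) [Fintype U] : Form U :=
  Form.conj (ConFree U) (bigConj fun x => Form.equiv (Form.var (PVar.inn x))
    (bigConj fun y => Form.impl (Form.conj (Form.var (PVar.aw y)) (Form.var (PVar.att y x)))
      (bigDisj fun z => Form.conj (Form.var (PVar.inn z)) (Form.var (PVar.att z y)))))

def GroundedF (U : Type) [Fintype U] : Form U :=
  Form.conj (CompleteF U)
    (Form.box (Prog.seq (mkFalseOne (INlist U)) (mkFalseSome (INlist U))) (Form.neg (CompleteF U)))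

def PreferredF (U : Type) [Fintype U] : Form U :=
  Form.conj (AdmissibleF U)
    (Form.box (Prog.seq (mkTrueOne (INlist U)) (mkTrueSome (INlist U))) (Form.neg (AdmissibleF U)))

def NaiveF (U : Type) [Fintype U] : Form U :=
  Form.conj (ConFree U) (Form.box (mkTrueOne (INlist U)) (Form.neg (ConFree U)))

def IncludedInCp (U : Type) [Fintype U] : Form U :=
  bigConj fun x => Form.impl
    (Form.disj (Form.var (PVar.inn x)) (Form.conj (Form.var (PVar.aw x))
      (bigDisj fun y => Form.conj (Form.var (PVar.inn y)) (Form.var (PVar.att y x)))))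
    (Form.disj (Form.var (PVar.inn' x)) (Form.conj (Form.var (PVar.aw x))
      (bigDisj fun y => Form.conj (Form.var (PVar.inn' y)) (Form.var (PVar.att y x)))))

def IncludesCp (U : Type) [Fintype U] : Form U :=
  bigConj fun x => Form.impl
    (Form.disj (Form.var (PVar.inn' x)) (Form.conj (Form.var (PVar.aw x))
      (bigDisj fun y => Form.conj (Form.var (PVar.inn' y)) (Form.var (PVar.att y x)))))
    (Form.disj (Form.var (PVar.inn x)) (Form.conj (Form.var (PVar.aw x))
      (bigDisj fun y => Form.conj (Form.var (PVar.inn y)) (Form.var (PVar.att y x)))))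

/-- makeExt^σ = vary(IN_U); φ_σ? -/
def makeExt (U : Type) [Fintype U] (φ : Form U) : Prog U :=
  Prog.seq (vary (INlist U)) (Prog.test φ)

def SemiStableF (U : Type) [Fintype U] : Form U :=
  Form.conj (CompleteF U)
    (Form.box (Prog.seq (copyIN U) (makeExt U (CompleteF U)))
      (Form.impl (IncludesCp U) (IncludedInCp U)))

/-- A_v -/
def Av (v : Val U) : Set U := {x | PVar.aw x ∈ v}
/-- R_v -/
def Rv (v : Val U) : Set (U × U) := {q | q.1 ∈ Av v ∧ q.2 ∈ Av v ∧ PVar.att q.1 q.2 ∈ v}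
/-- E(v) -/
def Ev (v : Val U) : Set U := {x | PVar.inn x ∈ v}
/-- {x ∈ U : in'_x ∈ v} -/
def Cv (v : Val U) : Set U := {x | PVar.inn' x ∈ v}
/-- v_(A,R) = AW_A ∪ ATT_R -/
def valOf (A : Set U) (R : Set (U × U)) : Val U :=
  (PVar.aw '' A) ∪ ((fun q : U × U => PVar.att q.1 q.2) '' R)

/-- E⁺, the set of arguments of A attacked by E in (A,R). -/
def attacked (A : Set U) (R : Set (U × U)) (E : Set U) : Set U :=
  {x ∈ A | ∃ y ∈ E, (y, x) ∈ R}
/-- E⊕ = E ∪ E⁺, the range of E. -/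
def rangeOf (A : Set U) (R : Set (U × U)) (E : Set U) : Set U :=
  E ∪ attacked A R E

def IsConflictFree (A : Set U) (R : Set (U × U)) (E : Set U) : Prop :=
  E ⊆ A ∧ E ∩ attacked A R E = ∅
def Defends (A : Set U) (R : Set (U × U)) (E : Set U) (a : U) : Prop :=
  ∀ x ∈ A, (x, a) ∈ R → x ∈ attacked A R E
def IsAdmissibleExt (A : Set U) (R : Set (U × U)) (E : Set U) : Prop :=
  IsConflictFree A R E ∧ ∀ a ∈ E, Defends A R E a
def IsStableExt (A : Set U) (R : Set (U × U)) (E : Set U) : Prop :=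
  IsConflictFree A R E ∧ A \ E ⊆ attacked A R E
def IsCompleteExt (A : Set U) (R : Set (U × U)) (E : Set U) : Prop :=
  IsConflictFree A R E ∧ E = {a ∈ A | Defends A R E a}
def IsGroundedExt (A : Set U) (R : Set (U × U)) (E : Set U) : Prop :=
  IsCompleteExt A R E ∧ ∀ E', IsCompleteExt A R E' → E' ⊆ E → E' = E
def IsPreferredExt (A : Set U) (R : Set (U × U)) (E : Set U) : Prop :=
  IsCompleteExt A R E ∧ ∀ E', IsCompleteExt A R E' → E ⊆ E' → E' = E
def IsNaiveExt (A : Set U) (R : Set (U × U)) (E : Set U) : Prop :=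
  IsConflictFree A R E ∧ ∀ E', IsConflictFree A R E' → E ⊆ E' → E' = E
def IsSemiStableExt (A : Set U) (R : Set (U × U)) (E : Set U) : Prop :=
  IsCompleteExt A R E ∧ ¬ ∃ E', IsCompleteExt A R E' ∧ rangeOf A R E ⊂ rangeOf A R E'

end DLPA

end

/-!
Both formulas read a valuation only through `(A_v, R_v, E(v))`, and the programs involved
change acceptance variables only: `vary(IN_U)` reaches every acceptance set, while
`mkTrueOne(IN_U); mkTrueSome(IN_U)` reaches exactly the strict supersets of `E(v)`.
So `Preferred` says that `E(v)` is a ⊆-maximal admissible set. By Dung's fundamental lemma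
(an admissible set stays admissible when it absorbs an argument it defends) the maximal
admissible sets are exactly the maximal complete extensions, as the set of arguments is finite.
-/

namespace DLPA

variable {U : Type} {v w : Val U}

section Semantics

@[simp] lemma sat_var {p : PVar U} : Sat v (Form.var p) ↔ p ∈ v := by simp [Sat]
@[simp] lemma sat_neg {φ : Form U} : Sat v (Form.neg φ) ↔ ¬ Sat v φ := by simp [Sat]
@[simp] lemma sat_conj {φ ψ : Form U} :
    Sat v (Form.conj φ ψ) ↔ Sat v φ ∧ Sat v ψ := by simp [Sat]
@[simp] lemma sat_box {π : Prog U} {φ : Form U} :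
    Sat v (Form.box π φ) ↔ ∀ w, Rel π v w → Sat w φ := by simp [Sat]
@[simp] lemma sat_falsum : ¬ Sat v Form.falsum := by simp [Form.falsum]
@[simp] lemma sat_top : Sat v Form.top := by simp [Form.top]
@[simp] lemma sat_impl {φ ψ : Form U} :
    Sat v (Form.impl φ ψ) ↔ (Sat v φ → Sat v ψ) := by simp [Form.impl]
@[simp] lemma sat_disj {φ ψ : Form U} :
    Sat v (Form.disj φ ψ) ↔ Sat v φ ∨ Sat v ψ := by simp [Form.disj, or_iff_not_and_not]

@[simp] lemma rel_add {p : PVar U} : Rel (Prog.add p) v w ↔ w = insert p v := by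
  simp [Rel]
@[simp] lemma rel_rem {p : PVar U} : Rel (Prog.rem p) v w ↔ w = v \ {p} := by
  simp [Rel]
@[simp] lemma rel_test {φ : Form U} :
    Rel (Prog.test φ) v w ↔ w = v ∧ Sat v φ := by simp [Rel]
@[simp] lemma rel_seq {π₁ π₂ : Prog U} :
    Rel (Prog.seq π₁ π₂) v w ↔ ∃ u, Rel π₁ v u ∧ Rel π₂ u w := by simp [Rel]
@[simp] lemma rel_choice {π₁ π₂ : Prog U} :
    Rel (Prog.choice π₁ π₂) v w ↔ Rel π₁ v w ∨ Rel π₂ v w := by simp [Rel]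
@[simp] lemma rel_skip : Rel Prog.skip v w ↔ w = v := by simp [Prog.skip]

lemma sat_conjList {L : List (Form U)} :
    Sat v (conjList L) ↔ ∀ φ ∈ L, Sat v φ := by
  induction L with
  | nil => simp [conjList]
  | cons φ L ih => simp [conjList, ih]

lemma sat_disjList {L : List (Form U)} :
    Sat v (disjList L) ↔ ∃ φ ∈ L, Sat v φ := by
  induction L with
  | nil => simp [disjList]
  | cons φ L ih => simp [disjList, ih]

@[simp] lemma mem_enum [Fintype U] (x : U) : x ∈ enum U := by simp [enum]

@[simp] lemma sat_bigConj [Fintype U] {f : U → Form U} :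
    Sat v (bigConj f) ↔ ∀ x, Sat v (f x) := by
  simp [bigConj, sat_conjList]

@[simp] lemma sat_bigDisj [Fintype U] {f : U → Form U} :
    Sat v (bigDisj f) ↔ ∃ x, Sat v (f x) := by
  simp [bigDisj, sat_disjList]

end Semantics

section ListPrograms

lemma rel_unionList_cons {β : Type} (f : β → Prog U) (p : β) (L : List β) :
    Rel (unionList f (p :: L)) v w ↔ ∃ q ∈ p :: L, Rel (f q) v w := by
  induction L generalizing p with
  | nil => simp [unionList]
  | cons q L ih => simp [unionList, ih]

lemma rel_mkTrueOne {L : List (PVar U)} (hL : L ≠ []) :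
    Rel (mkTrueOne L) v w ↔ ∃ p ∈ L, p ∉ v ∧ w = insert p v := by
  obtain ⟨p, L, rfl⟩ := List.exists_cons_of_ne_nil hL
  simp only [mkTrueOne, rel_unionList_cons, rel_seq, rel_test, rel_add, sat_neg, sat_var]
  grind

lemma rel_mkTrueSome {L : List (PVar U)} :
    Rel (mkTrueSome L) v w ↔ v ⊆ w ∧ w ⊆ v ∪ {p | p ∈ L} := by
  induction L generalizing v with
  | nil => simp [mkTrueSome, seqList, Set.Subset.antisymm_iff, and_comm]
  | cons p L ih =>
    simp only [mkTrueSome] at ih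
    simp only [mkTrueSome, seqList, rel_seq, rel_choice, rel_add, rel_skip, ih]
    constructor
    · rintro ⟨u, rfl | rfl, hu⟩ <;> grind
    · intro h
      by_cases hp : p ∈ w
      · exact ⟨insert p v, Or.inl rfl, by grind⟩
      · exact ⟨v, Or.inr rfl, by grind⟩

lemma rel_vary {L : List (PVar U)} :
    Rel (vary L) v w ↔ ∀ p ∉ L, (p ∈ w ↔ p ∈ v) := by
  induction L generalizing v with
  | nil => simp [vary, seqList, Set.ext_iff]
  | cons p L ih =>
    simp only [vary] at ih
    simp only [vary, seqList, rel_seq, rel_choice, rel_add, rel_rem, ih]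
    constructor
    · rintro ⟨u, rfl | rfl, hu⟩ q hq <;> grind
    · intro h
      by_cases hp : p ∈ w
      · exact ⟨insert p v, Or.inl rfl, by grind⟩
      · exact ⟨v \ {p}, Or.inr rfl, by grind⟩

lemma rel_seq_mkTrueOne_mkTrueSome {L : List (PVar U)} (hL : L ≠ []) :
    Rel (Prog.seq (mkTrueOne L) (mkTrueSome L)) v w ↔ v ⊂ w ∧ w ⊆ v ∪ {p | p ∈ L} := by
  simp only [rel_seq, rel_mkTrueOne hL, rel_mkTrueSome]
  constructor
  · rintro ⟨_, ⟨p, hpL, hpv, rfl⟩, hvw, hwv⟩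
    exact ⟨(Set.ssubset_insert hpv).trans_subset hvw, hwv.trans (by grind)⟩
  · rintro ⟨hvw, hwv⟩
    obtain ⟨p, hpw, hpv⟩ := Set.exists_of_ssubset hvw
    exact ⟨insert p v, ⟨p, by grind, hpv, rfl⟩, Set.insert_subset hpw hvw.subset,
      hwv.trans (by grind)⟩

end ListPrograms

section Encoding

def AgreeOffIN (v w : Val U) : Prop := ∀ p ∉ Set.range (@PVar.inn U), (p ∈ w ↔ p ∈ v)

lemma AgreeOffIN.Av_eq (h : AgreeOffIN v w) : Av w = Av v := by
  ext x
  exact h _ (by simp)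

lemma AgreeOffIN.Rv_eq (h : AgreeOffIN v w) : Rv w = Rv v := by
  ext ⟨x, y⟩
  simp only [Rv, h.Av_eq, Set.mem_ofPred_eq, h (PVar.att x y) (by simp)]

lemma exists_agreeOffIN_Ev_eq (v : Val U) (E : Set U) : ∃ w, AgreeOffIN v w ∧ Ev w = E := by
  refine ⟨v \ Set.range PVar.inn ∪ PVar.inn '' E, fun p hp => ?_, ?_⟩
  · grind
  · ext x
    simp [Ev]

lemma mem_INlist [Fintype U] {p : PVar U} : p ∈ INlist U ↔ p ∈ Set.range PVar.inn := by
  simp [INlist]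

lemma INlist_ne_nil [Fintype U] [Nonempty U] : INlist U ≠ [] := by
  simp [INlist, enum, Finset.univ_nonempty.ne_empty]

lemma rel_vary_INlist [Fintype U] : Rel (vary (INlist U)) v w ↔ AgreeOffIN v w := by
  simp only [rel_vary, mem_INlist, AgreeOffIN]

lemma rel_seq_mkTrueOne_mkTrueSome_INlist [Fintype U] [Nonempty U] :
    Rel (Prog.seq (mkTrueOne (INlist U)) (mkTrueSome (INlist U))) v w ↔
      AgreeOffIN v w ∧ Ev v ⊂ Ev w := by
  simp only [rel_seq_mkTrueOne_mkTrueSome INlist_ne_nil, mem_INlist]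
  constructor
  · rintro ⟨hvw, hwv⟩
    obtain ⟨_, hpw, hpv⟩ := Set.exists_of_ssubset hvw
    obtain ⟨x, rfl⟩ : _ ∈ Set.range PVar.inn := (hwv hpw).resolve_left hpv
    refine ⟨fun p hp => ⟨fun h => (hwv h).resolve_right hp, fun h => hvw.subset h⟩, ?_⟩
    have hE : Ev v ⊆ Ev w := fun y hy => hvw.subset hy
    exact (Set.ssubset_iff_of_subset hE).2 ⟨x, hpw, hpv⟩
  · rintro ⟨h, hE⟩
    obtain ⟨x, hxw, hxv⟩ := Set.exists_of_ssubset hE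
    have hvw : v ⊆ w := by
      rintro p hp
      by_cases hin : p ∈ Set.range PVar.inn
      · obtain ⟨y, rfl⟩ := hin
        exact hE.subset hp
      · exact (h p hin).2 hp
    refine ⟨(Set.ssubset_iff_of_subset hvw).2 ⟨PVar.inn x, hxw, hxv⟩, fun p hp => ?_⟩
    by_cases hin : p ∈ Set.range PVar.inn
    · exact Or.inr hin
    · exact Or.inl ((h p hin).1 hp)

end Encoding

section Argumentation

variable {A : Set U} {R : Set (U × U)} {E F : Set U}

lemma attacked_mono (h : E ⊆ F) : attacked A R E ⊆ attacked A R F :=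
  fun _ ⟨hx, y, hy, hyx⟩ => ⟨hx, y, h hy, hyx⟩

lemma Defends.mono {a : U} (hd : Defends A R E a) (h : E ⊆ F) : Defends A R F a :=
  fun x hx hxa => attacked_mono h (hd x hx hxa)

lemma IsConflictFree.notMem_attacked (h : IsConflictFree A R E) {x : U} (hx : x ∈ E) :
    x ∉ attacked A R E :=
  fun hx' => Set.eq_empty_iff_forall_notMem.1 h.2 x ⟨hx, hx'⟩

lemma IsCompleteExt.isAdmissibleExt (h : IsCompleteExt A R E) : IsAdmissibleExt A R E :=
  ⟨h.1, fun a ha => ((Set.ext_iff.1 h.2 a).1 ha).2⟩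

/-- Dung's fundamental lemma. No member of `E` attacks `a`, since `E` would have to
counter-attack that member, contradicting conflict-freeness. -/
lemma IsAdmissibleExt.insert {a : U} (hE : IsAdmissibleExt A R E) (ha : a ∈ A)
    (hd : Defends A R E a) : IsAdmissibleExt A R (insert a E) := by
  obtain ⟨hcf, hdef⟩ := hE
  have not_attacks_a : ∀ y ∈ E, (y, a) ∉ R := fun y hy hya =>
    hcf.notMem_attacked hy (hd y (hcf.1 hy) hya)
  have a_not_attacked : a ∉ attacked A R E := fun ⟨_, y, hy, hya⟩ => not_attacks_a y hy hya
  refine ⟨⟨Set.insert_subset ha hcf.1, Set.eq_empty_iff_forall_notMem.2 ?_⟩, ?_⟩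
  · rintro z ⟨hz, hzA, y, hy, hyz⟩
    rcases hy with rfl | hy <;> rcases hz with rfl | hz
    · exact a_not_attacked (hd _ hzA hyz)
    · exact a_not_attacked (hdef z hz _ ha hyz)
    · exact not_attacks_a y hy hyz
    · exact hcf.notMem_attacked hz ⟨hzA, y, hy, hyz⟩
  · rintro b (rfl | hb)
    · exact hd.mono (Set.subset_insert _ _)
    · exact (hdef b hb).mono (Set.subset_insert _ _)

lemma isCompleteExt_of_maximal (h : Maximal (IsAdmissibleExt A R) E) : IsCompleteExt A R E := by
  refine ⟨h.prop.1, Set.ext fun a => ⟨fun ha => ⟨h.prop.1.1 ha, h.prop.2 a ha⟩, ?_⟩⟩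
  rintro ⟨haA, hd⟩
  exact h.mem_of_prop_insert (h.prop.insert haA hd)

lemma isPreferredExt_iff_maximal [Finite U] :
    IsPreferredExt A R E ↔ Maximal (IsAdmissibleExt A R) E := by
  constructor
  · rintro ⟨hc, hmax⟩
    refine ⟨hc.isAdmissibleExt, fun F hF hEF => ?_⟩
    obtain ⟨G, hFG, hG⟩ := Finite.exists_le_maximal hF
    exact hmax G (isCompleteExt_of_maximal hG) (hEF.trans hFG) ▸ hFG
  · intro h
    exact ⟨isCompleteExt_of_maximal h, fun F hF hEF => h.eq_of_ge hF.isAdmissibleExt hEF⟩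

end Argumentation

section FormulaSemantics

variable [Fintype U]

lemma sat_Well : Sat v (Well U) ↔ Ev v ⊆ Av v := by
  simp [Well, Set.subset_def, Ev, Av]

lemma sat_ConFree : Sat v (ConFree U) ↔ IsConflictFree (Av v) (Rv v) (Ev v) := by
  simp only [ConFree, sat_conj, sat_Well, sat_bigConj, sat_neg, sat_var, IsConflictFree]
  refine and_congr_right fun hw => ⟨fun h => ?_, fun h x y ⟨hx, hy, hxy⟩ => ?_⟩
  · refine Set.eq_empty_iff_forall_notMem.2 fun x ⟨hx, _, y, hy, hyx⟩ => h y x ⟨hy, hx, hyx.2.2⟩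
  · exact Set.eq_empty_iff_forall_notMem.1 h y ⟨hy, hw hy, x, hx, hw hx, hw hy, hxy⟩

lemma sat_AdmissibleF : Sat v (AdmissibleF U) ↔ IsAdmissibleExt (Av v) (Rv v) (Ev v) := by
  simp only [AdmissibleF, sat_conj, sat_ConFree, sat_bigConj, sat_bigDisj, sat_impl, sat_var,
    IsAdmissibleExt, Defends, attacked]
  refine and_congr_right fun hcf => forall_congr' fun a => imp_congr_right fun ha => ?_
  constructor
  · intro h x hx hxa
    obtain ⟨z, hz, hzx⟩ := h x ⟨hx, hxa.2.2⟩
    exact ⟨hx, z, hz, hcf.1 hz, hx, hzx⟩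
  · intro h x ⟨hx, hxa⟩
    obtain ⟨-, z, hz, hzx⟩ := h x hx ⟨hx, hcf.1 ha, hxa⟩
    exact ⟨z, hz, hzx.2.2⟩

lemma sat_PreferredF [Nonempty U] :
    Sat v (PreferredF U) ↔ Maximal (IsAdmissibleExt (Av v) (Rv v)) (Ev v) := by
  simp only [PreferredF, sat_conj, sat_box, sat_neg, sat_AdmissibleF,
    rel_seq_mkTrueOne_mkTrueSome_INlist, Set.maximal_iff_forall_ssuperset]
  refine and_congr_right' ⟨fun h E hE => ?_, fun h w ⟨hw, hE⟩ => ?_⟩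
  · obtain ⟨w, hw, rfl⟩ := exists_agreeOffIN_Ev_eq v E
    simpa only [hw.Av_eq, hw.Rv_eq] using h w ⟨hw, hE⟩
  · rw [hw.Av_eq, hw.Rv_eq]
    exact h hE

end FormulaSemantics

lemma Av_valOf (A : Set U) (R : Set (U × U)) : Av (valOf A R) = A := by
  ext x
  simp [Av, valOf]

lemma Rv_valOf {A : Set U} {R : Set (U × U)} (hR : R ⊆ A ×ˢ A) : Rv (valOf A R) = R := by
  ext ⟨x, y⟩
  have hatt : PVar.att x y ∈ valOf A R ↔ (x, y) ∈ R := by simp [valOf]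
  simp only [Rv, Av_valOf, Set.mem_ofPred_eq, hatt]
  exact ⟨fun h => h.2.2, fun h => ⟨(hR h).1, (hR h).2, h⟩⟩

end DLPA

open DLPA in
/-- Theorem 1 for the preferred semantics. -/
theorem thm1_preferred
    (U : Type) [Fintype U] [Nonempty U] :
    (∀ v : Val U, Sat v (PreferredF U) ↔ IsPreferredExt (Av v) (Rv v) (Ev v)) ∧
    (∀ (A : Set U) (R : Set (U × U)), R ⊆ A ×ˢ A →
      {E | IsPreferredExt A R E} =
        {E | ∃ v : Val U, Rel (makeExt U (PreferredF U)) (valOf A R) v ∧ E = Ev v}) := by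
  have sat_iff (v : Val U) : Sat v (PreferredF U) ↔ IsPreferredExt (Av v) (Rv v) (Ev v) := by
    rw [sat_PreferredF, isPreferredExt_iff_maximal]
  refine ⟨sat_iff, fun A R hR => Set.ext fun E => ?_⟩
  simp only [Set.mem_ofPred_eq, makeExt, rel_seq, rel_test, rel_vary_INlist]
  constructor
  · intro hE
    obtain ⟨w, hw, rfl⟩ := exists_agreeOffIN_Ev_eq (valOf A R) E
    refine ⟨w, ⟨w, hw, rfl, ?_⟩, rfl⟩
    rwa [sat_iff, hw.Av_eq, hw.Rv_eq, Av_valOf, Rv_valOf hR]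
  · rintro ⟨_, ⟨w, hw, rfl, hsat⟩, rfl⟩
    rwa [sat_iff, hw.Av_eq, hw.Rv_eq, Av_valOf, Rv_valOf hR] at hsat
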